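/- Fix k ≥ 1, let M be a nonempty subset of EuclideanSpace ℝ (Fin k), and let ε > 0. For all natural numbers m, n, all v : Fin m → E and w : Fin n → E (with L² norms): if infDist(Fin.append v w, Δ_{m+n}(M)) ≤ ε and either infDist(v, Δ_m(M)) = ε or infDist(w, Δ_n(M)) = ε, then infDist(Fin.append v w, Δ_{m+n}(M)) = ε. Equivalently, writing D(m) = {v : infDist(v, Δ_m(M)) ≤ ε} and S(m) = {v : infDist(v, Δ_m(M)) = ε}, one has D(m+n) ∩ ((S(m) × D(n)) ∪ (D(m) × S(n))) ⊆ S(m+n). (The second displayed inclusion in the proof of Proposition 3.1, showing the multiplication μ on M^{−TM} is well defined on the quotients D(m)/S(m).) -/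

import Mathlib

open Metric

noncomputable section

variable (k : ℕ)

/-- `ℝ^k`. -/
abbrev E (k : ℕ) := EuclideanSpace ℝ (Fin k)

/-- `(Fin m → ℝ^k)` with the `L²` norm. -/
abbrev mE (k m : ℕ) := PiLp 2 (fun _ : Fin m => E k)

/-- The diagonal map `Δ_m : E → (Fin m → E)`. -/
def diagL2 (m : ℕ) (v : E k) : mE k m :=
  (WithLp.equiv 2 (Fin m → E k)).symm (fun _ => v)

/-- The image `Δ_m(M)` of a set `M ⊆ E` under the diagonal map. -/
def diagSet (M : Set (E k)) (m : ℕ) : Set (mE k m) := (diagL2 k m) '' M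

/-- Concatenation `Fin.append v w : Fin (m+n) → E`, as a map of `L²` spaces. -/
def appendL2 {m n : ℕ} (v : mE k m) (w : mE k n) : mE k (m + n) :=
  (WithLp.equiv 2 (Fin (m + n) → E k)).symm
    (Fin.append (WithLp.equiv 2 (Fin m → E k) v) (WithLp.equiv 2 (Fin n → E k) w))

theorem Metric.infDist_image_le_infDist_image {α β γ : Type*} [PseudoMetricSpace β]
    [PseudoMetricSpace γ] {f : α → β} {g : α → γ} {s : Set α} {a : β} {b : γ}
    (h : ∀ x ∈ s, dist a (f x) ≤ dist b (g x)) : infDist a (f '' s) ≤ infDist b (g '' s) := by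
  rcases s.eq_empty_or_nonempty with rfl | hs
  · simp
  refine (le_infDist (hs.image g)).2 ?_
  rintro _ ⟨x, hx, rfl⟩
  exact (infDist_le_dist_of_mem (Set.mem_image_of_mem f hx)).trans (h x hx)

lemma dist_appendL2_diagL2_sq (x : E k) {m n : ℕ} (v : mE k m) (w : mE k n) :
    dist (appendL2 k v w) (diagL2 k (m + n) x) ^ 2
      = dist v (diagL2 k m x) ^ 2 + dist w (diagL2 k n x) ^ 2 := by
  rw [PiLp.dist_eq_of_L2, PiLp.dist_eq_of_L2, PiLp.dist_eq_of_L2,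
    Real.sq_sqrt (by positivity), Real.sq_sqrt (by positivity),
    Real.sq_sqrt (by positivity), Fin.sum_univ_add]
  congr 1 <;> refine Finset.sum_congr rfl fun i _ => ?_ <;>
    simp [appendL2, diagL2, Fin.append_left, Fin.append_right]

lemma dist_diagL2_le_dist_appendL2_left (x : E k) {m n : ℕ} (v : mE k m) (w : mE k n) :
    dist v (diagL2 k m x) ≤ dist (appendL2 k v w) (diagL2 k (m + n) x) :=
  (sq_le_sq₀ dist_nonneg dist_nonneg).1 <| by
    rw [dist_appendL2_diagL2_sq]
    exact le_add_of_nonneg_right (sq_nonneg _)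

lemma dist_diagL2_le_dist_appendL2_right (x : E k) {m n : ℕ} (v : mE k m) (w : mE k n) :
    dist w (diagL2 k n x) ≤ dist (appendL2 k v w) (diagL2 k (m + n) x) :=
  (sq_le_sq₀ dist_nonneg dist_nonneg).1 <| by
    rw [dist_appendL2_diagL2_sq]
    exact le_add_of_nonneg_left (sq_nonneg _)

theorem infDist_append_eq_of_boundary (M : Set (E k))
    (ε : ℝ) (m n : ℕ) (v : mE k m) (w : mE k n)
    (hD : infDist (appendL2 k v w) (diagSet k M (m + n)) ≤ ε)
    (hS : infDist v (diagSet k M m) = ε ∨ infDist w (diagSet k M n) = ε) :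
    infDist (appendL2 k v w) (diagSet k M (m + n)) = ε := by
  refine le_antisymm hD ?_
  rcases hS with hv | hw
  · exact hv ▸ infDist_image_le_infDist_image fun x _ =>
      dist_diagL2_le_dist_appendL2_left k x v w
  · exact hw ▸ infDist_image_le_infDist_image fun x _ =>
      dist_diagL2_le_dist_appendL2_right k x v w

end
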